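/- arXiv:1310.5930 — 6 statements merged into one kernel-verified Lean document; each statement's English description precedes it below -/
import Mathlib

section
/- Let x_n > 0 be the distance from a point noise source to the center of a spherical receiver of radius r_obs > 0, let k > 0 be the molecule degradation rate, and set r_dif = r_obs − x_n, r_sum = r_obs + x_n, and β = sgn(r_dif). Then the asymptotic impact integral in the absence of flow satisfies ∫₀^∞ { (1/2)[erf((r_obs − x_n)/(2√τ)) + erf((r_obs + x_n)/(2√τ))] + (1/x_n)·√(τ/π)·[exp(−r_sum²/(4τ)) − exp(−r_dif²/(4τ))] } · exp(−k·τ) dτ = (1/(2k)) · [ β + 1 + (1/x_n)·exp(−r_sum·√k)·(k^{−1/2} + r_obs) − (1/x_n)·exp(−|r_dif|·√k)·(k^{−1/2} + β·r_obs) ]. -/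
/-!
With `w = a / (2√t)` and `v = √(k t)` one has `(w ± v)² = a² / (4t) + k t ± a√k`, so
`erf (w ± v)` differentiates to a multiple of `exp (-a² / (4t) - k t)`. Combining these with
`e^{-kt} erf w` and `√(t/π) e^{-a²/(4t) - kt}` gives explicit primitives of the two Laplace
integrands `erf (a / (2√t)) e^{-kt}` and `√(t/π) e^{-a²/(4t)} e^{-kt}`. Their limits at `0⁺`
and `∞` follow from `erf (±∞) = ±1` and yield
`∫₀^∞ erf (a / (2√τ)) e^{-kτ} dτ = sgn a · (1 - e^{-|a|√k}) / k` and
`∫₀^∞ √(τ/π) e^{-a²/(4τ)} e^{-kτ} dτ = (1/√k + |a|) e^{-|a|√k} / (2k)`;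
the theorem is the combination of these at `a = r_obs ± x_n`.
-/

open Real MeasureTheory

/-- The error function `erf a = (2/√π) ∫₀^a exp(−b²) db`. -/
noncomputable def erf (a : ℝ) : ℝ := (2 / Real.sqrt π) * ∫ b in (0:ℝ)..a, Real.exp (-b^2)

open Filter Topology Set Function

theorem Real.abs_eq_sign_mul_self (r : ℝ) : |r| = Real.sign r * r := by
  rcases lt_trichotomy r 0 with hr | rfl | hr
  · simp [abs_of_neg hr, Real.sign_of_neg hr]
  · simp
  · simp [abs_of_pos hr, Real.sign_of_pos hr]

theorem integral_Ioi_of_hasDerivAt_of_tendsto_nhdsGT {f f' : ℝ → ℝ} {a l m : ℝ}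
    (hderiv : ∀ x ∈ Ioi a, HasDerivAt f (f' x) x) (f'int : IntegrableOn f' (Ioi a))
    (hl : Tendsto f (𝓝[>] a) (𝓝 l)) (hm : Tendsto f atTop (𝓝 m)) :
    ∫ x in Ioi a, f' x = m - l := by
  classical
  have hcont : ContinuousWithinAt (update f a l) (Ici a) a := by
    simpa using hl
  have hderiv' : ∀ x ∈ Ioi a, HasDerivAt (update f a l) (f' x) x := fun x hx =>
    (hderiv x hx).congr_of_eventuallyEq <| by
      filter_upwards [eventually_ne_nhds (ne_of_gt hx)] with y hy using update_of_ne hy _ _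
  have hm' : Tendsto (update f a l) atTop (𝓝 m) := hm.congr' <| by
    filter_upwards [eventually_ne_atTop a] with y hy using (update_of_ne hy _ _).symm
  simpa using integral_Ioi_of_hasDerivAt_of_tendsto hcont hderiv' f'int hm'

theorem hasDerivAt_exp_neg_mul (k t : ℝ) :
    HasDerivAt (fun u => exp (-(k * u))) (-k * exp (-(k * t))) t := by
  simpa [mul_comm] using (((hasDerivAt_id t).const_mul k).neg).exp

theorem exp_neg_sq_div_le_one (a : ℝ) {t : ℝ} (ht : 0 < t) : exp (-a ^ 2 / (4 * t)) ≤ 1 :=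
  exp_le_one_iff.2 (div_nonpos_of_nonpos_of_nonneg (neg_nonpos.2 (sq_nonneg a)) (by positivity))

theorem hasDerivAt_erf (a : ℝ) : HasDerivAt erf (2 / √π * exp (-a ^ 2)) a := by
  have hc : Continuous fun b : ℝ => exp (-b ^ 2) := by fun_prop
  exact (hc.integral_hasStrictDerivAt 0 a).hasDerivAt.const_mul _

@[fun_prop]
theorem continuous_erf : Continuous erf :=
  continuous_iff_continuousAt.2 fun a => (hasDerivAt_erf a).continuousAt

@[fun_prop]
theorem measurable_erf : Measurable erf :=
  continuous_erf.measurable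

theorem erf_zero : erf 0 = 0 := by simp [erf]

theorem erf_neg (a : ℝ) : erf (-a) = -erf a := by
  have h := intervalIntegral.integral_comp_neg (a := 0) (b := a) fun b => exp (-b ^ 2)
  simp only [neg_zero, neg_sq] at h
  rw [erf, erf, h, intervalIntegral.integral_symm, mul_neg]

theorem strictMono_erf : StrictMono erf :=
  strictMono_of_deriv_pos fun a => (hasDerivAt_erf a).deriv ▸ by positivity

theorem tendsto_erf_atTop : Tendsto erf atTop (𝓝 1) := by
  have hint : Integrable fun b : ℝ => exp (-b ^ 2) := by
    simpa using integrable_exp_neg_mul_sq one_pos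
  have hhalf : ∫ b in Ioi (0:ℝ), exp (-b ^ 2) = √π / 2 := by
    simpa using integral_gaussian_Ioi 1
  have h := (intervalIntegral_tendsto_integral_Ioi 0 hint.integrableOn tendsto_id).const_mul
    (2 / √π)
  have hone : 2 / √π * (√π / 2) = 1 := by field_simp
  rwa [hhalf, hone] at h

theorem tendsto_erf_atBot : Tendsto erf atBot (𝓝 (-1)) := by
  have h := (tendsto_erf_atTop.comp tendsto_neg_atBot_atTop).neg
  simpa [comp_def, erf_neg] using h

theorem abs_erf_le_one (a : ℝ) : |erf a| ≤ 1 :=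
  abs_le.2 ⟨strictMono_erf.monotone.le_of_tendsto tendsto_erf_atBot a,
    strictMono_erf.monotone.ge_of_tendsto tendsto_erf_atTop a⟩

theorem tendsto_erf_mul_add {α : Type*} {l : Filter α} {g h : α → ℝ} (hg : Tendsto g l atTop)
    (hh : Tendsto h l (𝓝 0)) (b : ℝ) :
    Tendsto (fun x => erf (b * g x + h x)) l (𝓝 (Real.sign b)) := by
  rcases lt_trichotomy b 0 with hb | rfl | hb
  · rw [Real.sign_of_neg hb]
    exact tendsto_erf_atBot.comp ((hg.const_mul_atTop_of_neg hb).atBot_add hh)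
  · simp only [zero_mul, zero_add, Real.sign_zero]
    rw [← erf_zero]
    exact continuous_erf.continuousAt.tendsto.comp hh
  · rw [Real.sign_of_pos hb]
    exact tendsto_erf_atTop.comp ((hg.const_mul_atTop hb).atTop_add hh)

noncomputable def erfShift (a c t : ℝ) : ℝ := erf (a / (2 * √t) + c * √t)

theorem hasDerivAt_erfShift (a c : ℝ) {t : ℝ} (ht : 0 < t) :
    HasDerivAt (erfShift a c) (2 / √π * exp (-(a * c)) * (c / (2 * √t) - a / (4 * t * √t))
      * exp (-a ^ 2 / (4 * t)) * exp (-(c ^ 2 * t))) t := by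
  have hsqrt := hasDerivAt_sqrt ht.ne'
  have hst : √t ^ 2 = t := sq_sqrt ht.le
  have harg : HasDerivAt (fun u => a / (2 * √u) + c * √u)
      (c / (2 * √t) - a / (4 * t * √t)) t := by
    refine (((hasDerivAt_const t a).div (hsqrt.const_mul 2) (by positivity)).add
      (hsqrt.const_mul c)).congr_deriv ?_
    rw [mul_pow, hst]
    field_simp
    ring
  refine ((hasDerivAt_erf _).comp t harg).congr_deriv ?_
  have hexp : exp (-(a / (2 * √t) + c * √t) ^ 2)
      = exp (-(a * c)) * exp (-a ^ 2 / (4 * t)) * exp (-(c ^ 2 * t)) := by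
    rw [← exp_add, ← exp_add, add_sq, div_pow, mul_pow, mul_pow, hst]
    congr 1
    field_simp
    ring
  rw [hexp]
  ring

theorem tendsto_erfShift_nhdsGT (a c : ℝ) :
    Tendsto (erfShift a c) (𝓝[>] 0) (𝓝 (Real.sign a)) := by
  have hsqrt : Tendsto (fun t => √t) (𝓝[>] 0) (𝓝 0) :=
    (continuous_sqrt.tendsto' 0 0 sqrt_zero).mono_left nhdsWithin_le_nhds
  have hinv : Tendsto (fun t => (2 * √t)⁻¹) (𝓝[>] 0) atTop :=
    tendsto_inv_nhdsGT_zero.comp <| tendsto_nhdsWithin_iff.2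
      ⟨by simpa using hsqrt.const_mul 2,
        eventually_nhdsWithin_of_forall fun t ht => mul_pos two_pos (sqrt_pos.2 ht)⟩
  exact (tendsto_erf_mul_add hinv (by simpa using hsqrt.const_mul c) a).congr fun t => by
    rw [erfShift, div_eq_mul_inv]

theorem tendsto_erfShift_atTop (a c : ℝ) : Tendsto (erfShift a c) atTop (𝓝 (Real.sign c)) := by
  have h : Tendsto (fun t => a / (2 * √t)) atTop (𝓝 0) :=
    tendsto_const_nhds.div_atTop (tendsto_sqrt_atTop.const_mul_atTop two_pos)
  exact (tendsto_erf_mul_add tendsto_sqrt_atTop h c).congr fun t => by rw [erfShift, add_comm]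

noncomputable def erfLaplacePrimitive (k a t : ℝ) : ℝ :=
  (exp (a * √k) * erfShift a √k t + exp (-(a * √k)) * erfShift a (-√k) t) / (2 * k)
    - exp (-(k * t)) * erfShift a 0 t / k

noncomputable def gaussLaplacePrimitive (k a t : ℝ) : ℝ :=
  (((√k)⁻¹ - a) * exp (a * √k) * erfShift a √k t
      - ((√k)⁻¹ + a) * exp (-(a * √k)) * erfShift a (-√k) t) / (4 * k)
    - √(t / π) * exp (-a ^ 2 / (4 * t)) * exp (-(k * t)) / k

section Laplace

variable {k : ℝ}

theorem hasDerivAt_erfLaplacePrimitive (hk : 0 < k) (a : ℝ) {t : ℝ} (ht : 0 < t) :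
    HasDerivAt (erfLaplacePrimitive k a) (erf (a / (2 * √t)) * exp (-(k * t))) t := by
  have H := ((((hasDerivAt_erfShift a √k ht).const_mul (exp (a * √k))).add
    ((hasDerivAt_erfShift a (-√k) ht).const_mul (exp (-(a * √k))))).div_const (2 * k)).sub
    (((hasDerivAt_exp_neg_mul k t).mul (hasDerivAt_erfShift a 0 ht)).div_const k)
  refine H.congr_deriv ?_
  simp only [erfShift, neg_sq, sq_sqrt hk.le, mul_neg, neg_neg, zero_mul, mul_zero, add_zero,
    zero_pow two_ne_zero, neg_zero, exp_zero, zero_div, zero_sub]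
  rw [exp_neg (a * √k)]
  field_simp
  ring

theorem tendsto_erfLaplacePrimitive_atTop (hk : 0 < k) (a : ℝ) :
    Tendsto (erfLaplacePrimitive k a) atTop
      (𝓝 ((exp (a * √k) - exp (-(a * √k))) / (2 * k))) := by
  have hexp : Tendsto (fun t => exp (-(k * t))) atTop (𝓝 0) :=
    tendsto_exp_neg_atTop_nhds_zero.comp (tendsto_id.const_mul_atTop hk)
  have H := ((((tendsto_erfShift_atTop a √k).const_mul (exp (a * √k))).add
    ((tendsto_erfShift_atTop a (-√k)).const_mul (exp (-(a * √k))))).div_const (2 * k)).sub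
    ((hexp.mul (tendsto_erfShift_atTop a 0)).div_const k)
  unfold erfLaplacePrimitive
  convert H using 2
  simp [Real.sign_of_pos (sqrt_pos.2 hk), Real.sign_neg]
  ring

theorem tendsto_erfLaplacePrimitive_nhdsGT (a : ℝ) :
    Tendsto (erfLaplacePrimitive k a) (𝓝[>] 0)
      (𝓝 (Real.sign a * ((exp (a * √k) + exp (-(a * √k))) / (2 * k) - 1 / k))) := by
  have hexp : Tendsto (fun t => exp (-(k * t))) (𝓝[>] 0) (𝓝 1) := by
    have : Continuous fun t => exp (-(k * t)) := by fun_prop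
    simpa using (this.tendsto 0).mono_left nhdsWithin_le_nhds
  have H := ((((tendsto_erfShift_nhdsGT a √k).const_mul (exp (a * √k))).add
    ((tendsto_erfShift_nhdsGT a (-√k)).const_mul (exp (-(a * √k))))).div_const (2 * k)).sub
    ((hexp.mul (tendsto_erfShift_nhdsGT a 0)).div_const k)
  unfold erfLaplacePrimitive
  convert H using 2
  ring

theorem integrableOn_erf_mul_exp (hk : 0 < k) (a : ℝ) :
    IntegrableOn (fun τ => erf (a / (2 * √τ)) * exp (-(k * τ))) (Ioi 0) := by
  refine Integrable.mono' (exp_neg_integrableOn_Ioi 0 hk) (by fun_prop) ?_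
  refine Eventually.of_forall fun τ => ?_
  rw [norm_mul, norm_of_nonneg (exp_pos _).le, neg_mul]
  exact mul_le_of_le_one_left (exp_pos _).le (abs_erf_le_one _)

theorem integral_erf_mul_exp (hk : 0 < k) (a : ℝ) :
    ∫ τ in Ioi (0:ℝ), erf (a / (2 * √τ)) * exp (-(k * τ))
      = Real.sign a * (1 - exp (-(|a| * √k))) / k := by
  rw [integral_Ioi_of_hasDerivAt_of_tendsto_nhdsGT
    (fun t ht => hasDerivAt_erfLaplacePrimitive hk a ht) (integrableOn_erf_mul_exp hk a)
    (tendsto_erfLaplacePrimitive_nhdsGT a) (tendsto_erfLaplacePrimitive_atTop hk a)]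
  rcases lt_trichotomy a 0 with ha | rfl | ha
  · rw [Real.sign_of_neg ha, abs_of_neg ha, show -(-a * √k) = a * √k by ring]
    field_simp
    ring
  · simp
  · rw [Real.sign_of_pos ha, abs_of_pos ha]
    field_simp
    ring

theorem hasDerivAt_gaussLaplacePrimitive (hk : 0 < k) (a : ℝ) {t : ℝ} (ht : 0 < t) :
    HasDerivAt (gaussLaplacePrimitive k a)
      (√(t / π) * exp (-a ^ 2 / (4 * t)) * exp (-(k * t))) t := by
  have hroot : HasDerivAt (fun u => √(u / π)) (1 / (2 * √t) / √π) t := by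
    simpa only [← sqrt_div' _ pi_pos.le] using (hasDerivAt_sqrt ht.ne').div_const √π
  have hgauss : HasDerivAt (fun u => exp (-a ^ 2 / (4 * u)))
      (exp (-a ^ 2 / (4 * t)) * (a ^ 2 / (4 * t ^ 2))) t := by
    refine ((hasDerivAt_const t (-a ^ 2)).div ((hasDerivAt_id t).const_mul 4)
      (by positivity)).exp.congr_deriv ?_
    simp only [Pi.div_apply, id]
    field_simp
    ring
  have H := (((((hasDerivAt_erfShift a √k ht).const_mul (((√k)⁻¹ - a) * exp (a * √k))).sub
    ((hasDerivAt_erfShift a (-√k) ht).const_mul (((√k)⁻¹ + a) * exp (-(a * √k))))).div_const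
      (4 * k)).sub (((hroot.mul hgauss).mul (hasDerivAt_exp_neg_mul k t)).div_const k))
  refine H.congr_deriv ?_
  simp only [Pi.mul_apply, neg_sq, mul_neg, neg_neg, sq_sqrt hk.le, sqrt_div' _ pi_pos.le]
  rw [exp_neg (a * √k)]
  obtain ⟨s, hs, rfl⟩ : ∃ s, 0 < s ∧ s ^ 2 = t := ⟨√t, sqrt_pos.2 ht, sq_sqrt ht.le⟩
  obtain ⟨q, hq, rfl⟩ : ∃ q, 0 < q ∧ q ^ 2 = k := ⟨√k, sqrt_pos.2 hk, sq_sqrt hk.le⟩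
  simp only [sqrt_sq hs.le, sqrt_sq hq.le]
  field_simp
  ring

theorem tendsto_gaussLaplacePrimitive_atTop (hk : 0 < k) (a : ℝ) :
    Tendsto (gaussLaplacePrimitive k a) atTop
      (𝓝 ((((√k)⁻¹ - a) * exp (a * √k) + ((√k)⁻¹ + a) * exp (-(a * √k))) / (4 * k))) := by
  have hdecay : Tendsto (fun t => √(t / π) * exp (-a ^ 2 / (4 * t)) * exp (-(k * t))) atTop
      (𝓝 0) := by
    have hroot : Tendsto (fun t => √t * exp (-(k * t))) atTop (𝓝 0) :=
      (tendsto_rpow_mul_exp_neg_mul_atTop_nhds_zero (1 / 2) k hk).congr fun t => by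
        rw [sqrt_eq_rpow, neg_mul]
    have hgauss : Tendsto (fun t => exp (-a ^ 2 / (4 * t))) atTop (𝓝 1) :=
      (continuous_exp.tendsto' 0 1 exp_zero).comp
        (tendsto_const_nhds.div_atTop (tendsto_id.const_mul_atTop four_pos))
    convert (hroot.mul hgauss).div_const √π using 1
    · funext t
      rw [sqrt_div' _ pi_pos.le]
      ring
    · simp
  have H := ((((tendsto_erfShift_atTop a √k).const_mul (((√k)⁻¹ - a) * exp (a * √k))).sub
    ((tendsto_erfShift_atTop a (-√k)).const_mul (((√k)⁻¹ + a) * exp (-(a * √k))))).div_const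
      (4 * k)).sub (hdecay.div_const k)
  unfold gaussLaplacePrimitive
  convert H using 2
  simp [Real.sign_of_pos (sqrt_pos.2 hk), Real.sign_neg]

theorem tendsto_gaussLaplacePrimitive_nhdsGT (a : ℝ) :
    Tendsto (gaussLaplacePrimitive k a) (𝓝[>] 0)
      (𝓝 (Real.sign a * ((((√k)⁻¹ - a) * exp (a * √k) - ((√k)⁻¹ + a) * exp (-(a * √k)))
        / (4 * k)))) := by
  have hroot : Tendsto (fun t => √(t / π)) (𝓝[>] 0) (𝓝 0) := by
    have : Continuous fun t => √(t / π) := by fun_prop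
    simpa using (this.tendsto 0).mono_left nhdsWithin_le_nhds
  have hgauss : Tendsto (fun t => √(t / π) * exp (-a ^ 2 / (4 * t))) (𝓝[>] 0) (𝓝 0) :=
    squeeze_zero' (Eventually.of_forall fun t => by positivity)
      (eventually_nhdsWithin_of_forall fun t ht =>
        mul_le_of_le_one_right (sqrt_nonneg _) (exp_neg_sq_div_le_one a ht)) hroot
  have hexp : Tendsto (fun t => exp (-(k * t))) (𝓝[>] 0) (𝓝 1) := by
    have : Continuous fun t => exp (-(k * t)) := by fun_prop
    simpa using (this.tendsto 0).mono_left nhdsWithin_le_nhds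
  have H := ((((tendsto_erfShift_nhdsGT a √k).const_mul (((√k)⁻¹ - a) * exp (a * √k))).sub
    ((tendsto_erfShift_nhdsGT a (-√k)).const_mul (((√k)⁻¹ + a) * exp (-(a * √k))))).div_const
      (4 * k)).sub ((hgauss.mul hexp).div_const k)
  unfold gaussLaplacePrimitive
  convert H using 2
  ring

theorem integrableOn_sqrt_mul_exp_mul_exp (hk : 0 < k) (a : ℝ) :
    IntegrableOn (fun τ => √(τ / π) * exp (-a ^ 2 / (4 * τ)) * exp (-(k * τ))) (Ioi 0) := by
  have hdom := integrableOn_rpow_mul_exp_neg_mul_rpow (s := 1 / 2) (by norm_num) one_pos hk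
  refine Integrable.mono' (hdom.const_mul (√π)⁻¹) (by fun_prop)
    (ae_restrict_of_forall_mem measurableSet_Ioi fun τ hτ => ?_)
  rw [norm_of_nonneg (by positivity), rpow_one, ← sqrt_eq_rpow, sqrt_div' _ pi_pos.le, neg_mul]
  calc √τ / √π * exp (-a ^ 2 / (4 * τ)) * exp (-(k * τ))
      = (√π)⁻¹ * (√τ * exp (-(k * τ))) * exp (-a ^ 2 / (4 * τ)) := by ring
    _ ≤ (√π)⁻¹ * (√τ * exp (-(k * τ))) :=
      mul_le_of_le_one_right (by positivity) (exp_neg_sq_div_le_one a hτ)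

theorem integral_sqrt_mul_exp_mul_exp (hk : 0 < k) (a : ℝ) :
    ∫ τ in Ioi (0:ℝ), √(τ / π) * exp (-a ^ 2 / (4 * τ)) * exp (-(k * τ))
      = ((√k)⁻¹ + |a|) * exp (-(|a| * √k)) / (2 * k) := by
  rw [integral_Ioi_of_hasDerivAt_of_tendsto_nhdsGT
    (fun t ht => hasDerivAt_gaussLaplacePrimitive hk a ht) (integrableOn_sqrt_mul_exp_mul_exp hk a)
    (tendsto_gaussLaplacePrimitive_nhdsGT a) (tendsto_gaussLaplacePrimitive_atTop hk a)]
  rcases lt_trichotomy a 0 with ha | rfl | ha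
  · rw [Real.sign_of_neg ha, abs_of_neg ha, show -(-a * √k) = a * √k by ring]
    field_simp
    ring
  · simp
    field_simp
    ring
  · rw [Real.sign_of_pos ha, abs_of_pos ha]
    field_simp
    ring

end Laplace

/-- Asymptotic impact of a continuously-emitting noise source in the absence of flow,
with molecule degradation rate `k > 0` (Theorem 1 of the paper). -/
theorem asymptotic_impact_no_flow (x_n r_obs k r_dif r_sum β : ℝ)
    (hx : 0 < x_n) (hr : 0 < r_obs) (hk : 0 < k)
    (hdif : r_dif = r_obs - x_n) (hsum : r_sum = r_obs + x_n)
    (hβ : β = Real.sign r_dif) :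
    ∫ τ in Set.Ioi (0:ℝ),
      ((1/2) * (erf ((r_obs - x_n) / (2 * Real.sqrt τ))
                 + erf ((r_obs + x_n) / (2 * Real.sqrt τ)))
        + (1/x_n) * Real.sqrt (τ/π)
            * (Real.exp (-(r_sum^2) / (4*τ)) - Real.exp (-(r_dif^2) / (4*τ))))
      * Real.exp (-(k*τ))
    = (1/(2*k)) * (β + 1
        + (1/x_n) * Real.exp (-(r_sum * Real.sqrt k)) * ((Real.sqrt k)⁻¹ + r_obs)
        - (1/x_n) * Real.exp (-(|r_dif| * Real.sqrt k)) * ((Real.sqrt k)⁻¹ + β * r_obs)) := by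
  subst hdif hsum hβ
  have hE := integrableOn_erf_mul_exp hk
  have hG := integrableOn_sqrt_mul_exp_mul_exp hk
  have hs : 0 < r_obs + x_n := by linarith
  calc _ = ∫ τ in Ioi (0:ℝ),
          1 / 2 * (erf ((r_obs - x_n) / (2 * √τ)) * exp (-(k * τ))
            + erf ((r_obs + x_n) / (2 * √τ)) * exp (-(k * τ)))
          + 1 / x_n * (√(τ / π) * exp (-(r_obs + x_n) ^ 2 / (4 * τ)) * exp (-(k * τ))
            - √(τ / π) * exp (-(r_obs - x_n) ^ 2 / (4 * τ)) * exp (-(k * τ))) := by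
        congr 1 with τ
        ring
    _ = _ := by
        rw [integral_add, integral_const_mul, integral_const_mul, integral_add (hE _) (hE _),
          integral_sub (hG _) (hG _), integral_erf_mul_exp hk, integral_erf_mul_exp hk,
          integral_sqrt_mul_exp_mul_exp hk, integral_sqrt_mul_exp_mul_exp hk,
          Real.sign_of_pos hs, abs_of_pos hs, Real.abs_eq_sign_mul_self (r_obs - x_n)]
        · field_simp
          ring
        · exact ((hE _).add (hE _)).const_mul _
        · exact ((hG _).sub (hG _)).const_mul _
end

section
/- For every x > 0, every k ≥ 0, and all real v₁, v₂, one has ∫₀^∞ (4πτ)^{−3/2} · exp( −((x − v₁τ)² + (v₂τ)²)/(4τ) − k·τ ) dτ = (1/(4πx)) · exp( x·v₁/2 − (x/2)·√(v₁² + v₂² + 4k) ). -/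
/-!
Completing the square, `(x - v₁τ)² + (v₂τ)² = x² - 2xv₁τ + (v₁² + v₂²)τ²`, pulls the factor
`exp (x v₁ / 2)` out of the integral and leaves the time-integrated heat kernel in `ℝ³` with decay
rate `κ² = (v₁² + v₂² + 4k) / 4`, whose integral is the Yukawa potential `exp (-κx) / (4πx)`.
The substitution `τ = β² / s²` reduces the latter to the Cauchy–Schlömilch integral
`∫₀^∞ exp (-(s - m/s)²) ds = √π / 2`: averaging it with its image under `s ↦ m / s` produces
the weight `1 + m / s²`, and then `u = s - m / s` maps `(0, ∞)` onto `ℝ`.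
-/

open Real MeasureTheory Set

section ChangeOfVariables

variable {E : Type*} [NormedAddCommGroup E] [NormedSpace ℝ E] {m : ℝ}

theorem strictMonoOn_sub_div (hm : 0 ≤ m) : StrictMonoOn (fun s : ℝ => s - m / s) (Ioi 0) := by
  intro s hs t ht hst
  have : m / t ≤ m / s := div_le_div_of_nonneg_left hm hs hst.le
  simp only
  linarith

theorem image_sub_div_Ioi (hm : 0 < m) : (fun s : ℝ => s - m / s) '' Ioi 0 = univ := by
  refine eq_univ_of_forall fun y => ?_
  set r := √(y ^ 2 + 4 * m)
  have hr : r ^ 2 = y ^ 2 + 4 * m := sq_sqrt (by positivity)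
  have hyr : 0 < y + r := by
    have : |y| < r := by
      rw [← sqrt_sq_eq_abs]
      exact sqrt_lt_sqrt (sq_nonneg y) (by linarith)
    linarith [neg_abs_le y]
  refine ⟨(y + r) / 2, by simp only [mem_Ioi]; positivity, ?_⟩
  field_simp
  linear_combination hr

theorem hasDerivAt_sub_div (m : ℝ) {s : ℝ} (hs : s ≠ 0) :
    HasDerivAt (fun s => s - m / s) (1 + m / s ^ 2) s := by
  have h := (hasDerivAt_id' s).fun_sub ((hasDerivAt_inv hs).const_mul m)
  simp only [← div_eq_mul_inv, mul_neg, sub_neg_eq_add] at h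
  exact h

theorem integral_Ioi_comp_sub_div (hm : 0 < m) (f : ℝ → E) :
    ∫ s in Ioi 0, (1 + m / s ^ 2) • f (s - m / s) = ∫ u, f u := by
  have := integral_image_eq_integral_abs_deriv_smul measurableSet_Ioi
    (fun s hs => (hasDerivAt_sub_div m (ne_of_gt hs)).hasDerivWithinAt)
    (strictMonoOn_sub_div hm.le).injOn f
  rw [image_sub_div_Ioi hm, Measure.restrict_univ] at this
  rw [this]
  refine setIntegral_congr_fun measurableSet_Ioi fun s (hs : 0 < s) => ?_
  rw [abs_of_pos (by positivity)]

theorem integrableOn_Ioi_comp_sub_div_iff (hm : 0 < m) (f : ℝ → E) :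
    IntegrableOn (fun s => (1 + m / s ^ 2) • f (s - m / s)) (Ioi 0) ↔ Integrable f := by
  have := integrableOn_image_iff_integrableOn_abs_deriv_smul measurableSet_Ioi
    (fun s hs => (hasDerivAt_sub_div m (ne_of_gt hs)).hasDerivWithinAt)
    (strictMonoOn_sub_div hm.le).injOn f
  rw [image_sub_div_Ioi hm, integrableOn_univ] at this
  rw [this]
  refine integrableOn_congr_fun (fun s (hs : 0 < s) => ?_) measurableSet_Ioi
  rw [abs_of_pos (by positivity)]

theorem image_div_Ioi (hm : 0 < m) : (fun s : ℝ => m / s) '' Ioi 0 = Ioi 0 := by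
  refine Subset.antisymm (image_subset_iff.2 fun s (hs : 0 < s) => div_pos hm hs) fun t ht => ?_
  exact ⟨m / t, div_pos hm ht, div_div_cancel₀ hm.ne'⟩

theorem integral_Ioi_comp_div (hm : 0 < m) (f : ℝ → E) :
    ∫ s in Ioi 0, (m / s ^ 2) • f (m / s) = ∫ t in Ioi 0, f t := by
  have hderiv : ∀ s ∈ Ioi (0 : ℝ), HasDerivWithinAt (fun s => m / s) (-(m / s ^ 2)) (Ioi 0) s :=
    fun s hs => by
      simpa [div_eq_mul_inv] using ((hasDerivAt_inv (ne_of_gt hs)).const_mul m).hasDerivWithinAt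
  have := integral_image_eq_integral_abs_deriv_smul measurableSet_Ioi hderiv
    (fun s _ t _ h => by simpa only [div_div_cancel₀ hm.ne'] using congrArg (m / ·) h) f
  rw [image_div_Ioi hm] at this
  rw [this]
  refine setIntegral_congr_fun measurableSet_Ioi fun s (hs : 0 < s) => ?_
  rw [abs_neg, abs_of_pos (by positivity)]

theorem integral_Ioi_comp_sub_div_of_even (hm : 0 < m) {f : ℝ → E} (hf : Integrable f)
    (heven : ∀ u, f (-u) = f u) :
    ∫ s in Ioi 0, f (s - m / s) = (2 : ℝ)⁻¹ • ∫ u, f u := by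
  have hJ := (integrableOn_Ioi_comp_sub_div_iff hm f).2 hf
  have hI : IntegrableOn (fun s => f (s - m / s)) (Ioi 0) := by
    have hweight : ∀ s : ℝ, 1 ≤ 1 + m / s ^ 2 := fun s => by
      have : 0 ≤ m / s ^ 2 := by positivity
      linarith
    refine (hJ.bdd_smul (φ := fun s => (1 + m / s ^ 2)⁻¹) 1
      (by fun_prop : Measurable _).aestronglyMeasurable
      (ae_of_all _ fun s => ?_)).congr (ae_of_all _ fun s => ?_)
    · rw [norm_inv, norm_of_nonneg (by linarith [hweight s])]
      exact inv_le_one_of_one_le₀ (hweight s)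
    · simp only [Pi.smul_apply', smul_smul]
      rw [inv_mul_cancel₀ (by linarith [hweight s]), one_smul]
  have hsplit : ∫ s in Ioi 0, (m / s ^ 2) • f (s - m / s)
      = (∫ u, f u) - ∫ s in Ioi 0, f (s - m / s) := by
    rw [← integral_Ioi_comp_sub_div hm f, ← integral_sub hJ hI]
    refine setIntegral_congr_fun measurableSet_Ioi fun s _ => ?_
    simp only [add_smul, one_smul, add_sub_cancel_left]
  have hsymm : ∫ s in Ioi 0, (m / s ^ 2) • f (s - m / s) = ∫ s in Ioi 0, f (s - m / s) := by
    rw [← integral_Ioi_comp_div hm fun s => f (s - m / s)]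
    refine setIntegral_congr_fun measurableSet_Ioi fun s _ => ?_
    rw [div_div_cancel₀ hm.ne', ← heven, neg_sub]
  rw [hsymm] at hsplit
  rw [eq_sub_iff_add_eq, ← two_smul ℝ] at hsplit
  rw [← hsplit, smul_smul, inv_mul_cancel₀ two_ne_zero, one_smul]

theorem integral_Ioi_comp_div_sq {b : ℝ} (hb : 0 < b) (f : ℝ → E) :
    ∫ s in Ioi 0, (2 * b / s ^ 3) • f (b / s ^ 2) = ∫ τ in Ioi 0, f τ := by
  rw [← integral_Ioi_comp_div hb f,
    ← integral_comp_rpow_Ioi_of_pos (g := fun t => (b / t ^ 2) • f (b / t)) two_pos]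
  refine setIntegral_congr_fun measurableSet_Ioi fun s (hs : 0 < s) => ?_
  norm_num only [rpow_two, rpow_one, smul_smul]
  congr 1
  field_simp

end ChangeOfVariables

theorem integral_Ioi_exp_neg_sq_sub_div {m : ℝ} (hm : 0 ≤ m) :
    ∫ s in Ioi 0, exp (-(s - m / s) ^ 2) = √π / 2 := by
  rcases hm.eq_or_lt with rfl | hm
  · simpa using integral_gaussian_Ioi 1
  · rw [integral_Ioi_comp_sub_div_of_even hm (f := fun u => exp (-u ^ 2))
      (by simpa using integrable_exp_neg_mul_sq one_pos) (by simp)]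
    simpa [div_eq_inv_mul] using integral_gaussian 1

theorem rpow_neg_three_halves {a : ℝ} (ha : 0 ≤ a) : a ^ (-(3 : ℝ) / 2) = (√a ^ 3)⁻¹ := by
  rw [sqrt_eq_rpow, ← rpow_natCast, ← rpow_mul ha, ← rpow_neg ha]
  norm_num

theorem integral_Ioi_rpow_neg_three_halves_mul_exp {β κ : ℝ} (hβ : 0 < β) (hκ : 0 ≤ κ) :
    ∫ τ in Ioi 0, τ ^ (-(3 : ℝ) / 2) * exp (-β ^ 2 / τ - κ ^ 2 * τ)
      = √π / β * exp (-(2 * β * κ)) := by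
  rw [← integral_Ioi_comp_div_sq (pow_pos hβ 2)]
  have hpoint : ∀ s ∈ Ioi (0 : ℝ),
      (2 * β ^ 2 / s ^ 3) • ((β ^ 2 / s ^ 2) ^ (-(3 : ℝ) / 2)
        * exp (-β ^ 2 / (β ^ 2 / s ^ 2) - κ ^ 2 * (β ^ 2 / s ^ 2)))
      = (2 / β * exp (-(2 * β * κ))) * exp (-(s - β * κ / s) ^ 2) := fun s (hs : 0 < s) => by
    rw [smul_eq_mul, ← div_pow, rpow_neg_three_halves (by positivity), sqrt_sq (by positivity),
      mul_assoc _ (exp _), ← exp_add]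
    field_simp
    ring_nf
  rw [setIntegral_congr_fun measurableSet_Ioi hpoint, integral_const_mul,
    integral_Ioi_exp_neg_sq_sub_div (by positivity)]
  field_simp

theorem integral_Ioi_heatKernel_mul_exp_eq_yukawa {r κ : ℝ} (hr : 0 < r) (hκ : 0 ≤ κ) :
    ∫ τ in Ioi 0, (4 * π * τ) ^ (-(3 : ℝ) / 2) * exp (-r ^ 2 / (4 * τ) - κ ^ 2 * τ)
      = exp (-(r * κ)) / (4 * π * r) := by
  have hpoint : ∀ τ ∈ Ioi (0 : ℝ),
      (4 * π * τ) ^ (-(3 : ℝ) / 2) * exp (-r ^ 2 / (4 * τ) - κ ^ 2 * τ)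
      = (4 * π) ^ (-(3 : ℝ) / 2) * (τ ^ (-(3 : ℝ) / 2) * exp (-(r / 2) ^ 2 / τ - κ ^ 2 * τ)) :=
    fun τ (hτ : 0 < τ) => by
      rw [mul_rpow (by positivity) hτ.le, mul_assoc]
      ring_nf
  have hsqrt : √(4 * π) = 2 * √π := by
    rw [sqrt_mul zero_le_four, show (4 : ℝ) = 2 ^ 2 by norm_num, sqrt_sq zero_le_two]
  rw [setIntegral_congr_fun measurableSet_Ioi hpoint, integral_const_mul,
    integral_Ioi_rpow_neg_three_halves_mul_exp (half_pos hr) hκ,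
    rpow_neg_three_halves (by positivity), hsqrt]
  have hπ : √π ^ 2 = π := sq_sqrt pi_pos.le
  field_simp
  linear_combination -4 * hπ

/-- Asymptotic impact (per unit receiver volume, under the uniform concentration assumption)
of a continuously-emitting noise source at distance `x`, with flow `(v₁, v₂)` and
degradation rate `k`. -/
theorem asymptotic_impact_uca_with_flow_and_degradation (x k : ℝ) (v₁ v₂ : ℝ)
    (hx : 0 < x) (hk : 0 ≤ k) :
    ∫ τ in Set.Ioi (0:ℝ),
      (4*π*τ) ^ (-(3:ℝ)/2)
        * Real.exp (-((x - v₁*τ)^2 + (v₂*τ)^2) / (4*τ) - k*τ)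
    = (1/(4*π*x)) * Real.exp (x*v₁/2 - (x/2) * Real.sqrt (v₁^2 + v₂^2 + 4*k)) := by
  set κ := √(v₁ ^ 2 + v₂ ^ 2 + 4 * k) / 2 with hκ
  have hκ2 : κ ^ 2 = (v₁ ^ 2 + v₂ ^ 2 + 4 * k) / 4 := by
    rw [div_pow, sq_sqrt (by positivity)]
    norm_num
  have hpoint : ∀ τ ∈ Ioi (0 : ℝ),
      (4 * π * τ) ^ (-(3 : ℝ) / 2) * exp (-((x - v₁ * τ) ^ 2 + (v₂ * τ) ^ 2) / (4 * τ) - k * τ)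
      = exp (x * v₁ / 2) * ((4 * π * τ) ^ (-(3 : ℝ) / 2) * exp (-x ^ 2 / (4 * τ) - κ ^ 2 * τ)) :=
    fun τ (hτ : 0 < τ) => by
      rw [mul_left_comm, ← exp_add, hκ2]
      congr 2
      field_simp
      ring
  rw [setIntegral_congr_fun measurableSet_Ioi hpoint, integral_const_mul,
    integral_Ioi_heatKernel_mul_exp_eq_yukawa hx (by positivity), sub_eq_add_neg, exp_add, hκ]
  ring_nf
end

section
/- Fix r_obs > 0, and define f : (0, ∞) → ℝ by f(k) = 1/k − exp(−r_obs·√k)·( 1/k + r_obs/√k ). Then f is strictly decreasing on (0, ∞); that is, any increase in the degradation rate k strictly decreases the expected asymptotic number of noise molecules observed, even when the noise source is located at the center of the receiver. -/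
open Real

/-! The substitution `x = r_obs √k` turns the impact into `r_obs² · g(x)` with
`g(x) = (1 - e⁻ˣ(1 + x)) / x²`, and `√` is strictly increasing, so it suffices that `g` is
strictly decreasing on `(0, ∞)`. Its derivative is `(e⁻ˣ(x² + 2x + 2) - 2) / x³`, which is
negative because `e^x` exceeds its cubic Taylor polynomial. -/

namespace Real

lemma exp_neg_mul_sq_add_two_mul_add_two_lt_two {x : ℝ} (hx : 0 < x) :
    exp (-x) * (x ^ 2 + 2 * x + 2) < 2 := by
  have htaylor := sum_le_exp_of_nonneg hx.le 4
  simp only [Finset.sum_range_succ, Finset.sum_range_zero, Nat.factorial] at htaylor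
  norm_num at htaylor
  rw [exp_neg, inv_mul_lt_iff₀ (exp_pos x)]
  nlinarith [pow_pos hx 3]

end Real

noncomputable def impactProfile (x : ℝ) : ℝ := (1 - exp (-x) * (1 + x)) / x ^ 2

lemma hasDerivAt_impactProfile {x : ℝ} (hx : x ≠ 0) :
    HasDerivAt impactProfile ((exp (-x) * (x ^ 2 + 2 * x + 2) - 2) / x ^ 3) x := by
  have hexp : HasDerivAt (fun y => exp (-y)) (-exp (-x)) x := by
    simpa using (hasDerivAt_neg x).exp
  have hnum : HasDerivAt (fun y => 1 - exp (-y) * (1 + y)) (x * exp (-x)) x := by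
    refine ((hexp.mul ((hasDerivAt_id' x).const_add 1)).const_sub 1).congr_deriv ?_
    ring
  refine (hnum.div (hasDerivAt_pow 2 x) (pow_ne_zero 2 hx)).congr_deriv ?_
  field_simp
  ring

lemma strictAntiOn_impactProfile : StrictAntiOn impactProfile (Set.Ioi 0) := by
  have hderiv {x : ℝ} (hx : x ∈ Set.Ioi 0) :=
    hasDerivAt_impactProfile (Set.mem_Ioi.mp hx).ne'
  refine strictAntiOn_of_hasDerivWithinAt_neg (convex_Ioi 0)
    (f' := fun x => (exp (-x) * (x ^ 2 + 2 * x + 2) - 2) / x ^ 3)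
    (fun x hx => (hderiv hx).continuousAt.continuousWithinAt) (fun x hx => ?_) (fun x hx => ?_)
  · rw [interior_Ioi] at hx ⊢
    exact (hderiv hx).hasDerivWithinAt
  · rw [interior_Ioi, Set.mem_Ioi] at hx
    exact div_neg_of_neg_of_pos
      (sub_neg.mpr (exp_neg_mul_sq_add_two_mul_add_two_lt_two hx)) (pow_pos hx 3)

lemma one_div_sub_exp_eq_sq_mul_impactProfile {r k : ℝ} (hr : r ≠ 0) (hk : 0 < k) :
    1 / k - exp (-(r * √k)) * (1 / k + r / √k) = r ^ 2 * impactProfile (r * √k) := by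
  obtain ⟨s, hs, rfl⟩ : ∃ s, 0 < s ∧ k = s ^ 2 := ⟨√k, sqrt_pos.mpr hk, (sq_sqrt hk.le).symm⟩
  rw [impactProfile, sqrt_sq hs.le]
  field_simp

/-- Increasing the molecule degradation rate `k` strictly decreases the expected asymptotic
number of noise molecules observed, even when the noise source is at the receiver:
`f(k) = 1/k − exp(−r_obs √k)(1/k + r_obs/√k)` is strictly decreasing on `(0, ∞)`. -/
theorem worst_case_asymptotic_impact_strictAntiOn (r_obs : ℝ) (hr : 0 < r_obs)
    (f : ℝ → ℝ)
    (hf : ∀ k ∈ Set.Ioi (0:ℝ),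
      f k = 1/k - Real.exp (-(r_obs * Real.sqrt k)) * (1/k + r_obs / Real.sqrt k)) :
    StrictAntiOn f (Set.Ioi 0) := by
  intro a ha b hb hab
  rw [Set.mem_Ioi] at ha hb
  have hsqrt : r_obs * √a < r_obs * √b := mul_lt_mul_of_pos_left (sqrt_lt_sqrt ha.le hab) hr
  rw [hf a ha, hf b hb, one_div_sub_exp_eq_sq_mul_impactProfile hr.ne' ha,
    one_div_sub_exp_eq_sq_mul_impactProfile hr.ne' hb]
  exact mul_lt_mul_of_pos_left
    (strictAntiOn_impactProfile (show 0 < r_obs * √a by positivity)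
      (show 0 < r_obs * √b by positivity) hsqrt) (by positivity)
end

section
/- Fix p₀ ∈ ℝ³, v ∈ ℝ³, and k ≥ 0, and define C : (0, ∞) × ℝ³ → ℝ by C(t, p) = (4πt)^{−3/2} · exp( −‖p − p₀ − t·v‖² / (4t) − k·t ). Then C satisfies the advection–reaction–diffusion equation ∂C/∂t (t, p) = ΔC(t, p) − ⟪v, ∇C(t, p)⟫ − k·C(t, p) for all t > 0 and p ∈ ℝ³, where Δ is the spatial Laplacian, ∇ the spatial gradient, and ⟪·,·⟫ the Euclidean inner product. -/
/-!
At time `t`, `C t` is a Gaussian in space centred at `c = p₀ + t • v`, so each derivative of it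
is `C` times an explicit factor: `∇C = -(p - c) / (2t) · C` and, along a unit vector `u`,
`∂²C/∂u² = (⟪p - c, u⟫² / (4t²) - 1 / (2t)) · C`. Summing over an orthonormal basis (Parseval)
gives `ΔC = (‖p - c‖² / (4t²) - 3 / (2t)) · C`. Differentiating in `t` gives
`∂C/∂t = (‖p - c‖² / (4t²) + ⟪v, p - c⟫ / (2t) - k - 3 / (2t)) · C`, and the two factors differ
by exactly `-⟪v, ∇C⟫ / C - k`.
-/

open Real

open scoped RealInnerProductSpace

section Gaussian

variable {E : Type*} [NormedAddCommGroup E] [InnerProductSpace ℝ E]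

noncomputable def gaussianProfile (A t : ℝ) (c q : E) : ℝ := A * exp (-‖q - c‖ ^ 2 / (4 * t))

variable (A t : ℝ) (c : E)

theorem hasFDerivAt_gaussianProfile (q : E) :
    HasFDerivAt (gaussianProfile A t c)
      ((-(2 * t)⁻¹ * gaussianProfile A t c q) • innerSL ℝ (q - c)) q := by
  have hsq : HasFDerivAt (fun x => ‖x - c‖ ^ 2) (2 • innerSL ℝ (q - c)) q := by
    simpa using ((hasFDerivAt_id q).sub_const c).norm_sq
  have h : HasFDerivAt (fun x => A * exp (-(4 * t)⁻¹ * ‖x - c‖ ^ 2)) _ q :=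
    ((hsq.const_mul (-(4 * t)⁻¹)).exp).const_mul A
  have hf : gaussianProfile A t c = fun x => A * exp (-(4 * t)⁻¹ * ‖x - c‖ ^ 2) := by
    ext x
    rw [gaussianProfile, neg_div, div_eq_inv_mul, neg_mul]
  rw [hf]
  refine h.congr_fderiv ?_
  ext u
  simp only [smul_apply, innerSL_apply_apply, nsmul_eq_mul, smul_eq_mul]
  ring

theorem fderiv_gaussianProfile_apply (q u : E) :
    fderiv ℝ (gaussianProfile A t c) q u = -(2 * t)⁻¹ * gaussianProfile A t c q * ⟪q - c, u⟫ := by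
  rw [(hasFDerivAt_gaussianProfile A t c q).fderiv]
  rfl

theorem gradient_gaussianProfile [CompleteSpace E] (q : E) :
    gradient (gaussianProfile A t c) q = (-(2 * t)⁻¹ * gaussianProfile A t c q) • (q - c) := by
  refine HasGradientAt.gradient ?_
  rw [hasGradientAt_iff_hasFDerivAt, map_smul]
  exact hasFDerivAt_gaussianProfile A t c q

theorem fderiv_fderiv_gaussianProfile_apply_self (q u : E) :
    fderiv ℝ (fun x => fderiv ℝ (gaussianProfile A t c) x u) q u =
      gaussianProfile A t c q * (⟪q - c, u⟫ ^ 2 / (4 * t ^ 2) - ‖u‖ ^ 2 / (2 * t)) := by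
  have hinner : HasFDerivAt (fun x => ⟪x - c, u⟫) (innerSL ℝ u) q := by
    have := (innerSL ℝ u).hasFDerivAt.comp q ((hasFDerivAt_id q).sub_const c)
    simpa [Function.comp_def, real_inner_comm u] using this
  have h : HasFDerivAt (fun x => -(2 * t)⁻¹ * gaussianProfile A t c x * ⟪x - c, u⟫) _ q :=
    ((hasFDerivAt_gaussianProfile A t c q).const_mul (-(2 * t)⁻¹)).mul hinner
  simp_rw [fderiv_gaussianProfile_apply]
  rw [h.fderiv]
  simp only [add_apply, smul_apply, innerSL_apply_apply,
    smul_eq_mul, real_inner_self_eq_norm_sq, real_inner_comm u]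
  ring

theorem sum_fderiv_fderiv_gaussianProfile {ι : Type*} [Fintype ι] (b : OrthonormalBasis ι ℝ E)
    (q : E) :
    ∑ i, fderiv ℝ (fun x => fderiv ℝ (gaussianProfile A t c) x (b i)) q (b i) =
      gaussianProfile A t c q * (‖q - c‖ ^ 2 / (4 * t ^ 2) - Fintype.card ι / (2 * t)) := by
  simp only [fderiv_fderiv_gaussianProfile_apply_self, ← Finset.mul_sum, Finset.sum_sub_distrib,
    ← Finset.sum_div, b.sum_sq_inner_left, b.orthonormal.1, Finset.sum_const]
  simp

end Gaussian

theorem hasDerivAt_const_mul_rpow_const {a t : ℝ} (h : a * t ≠ 0) (r : ℝ) :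
    HasDerivAt (fun s => (a * s) ^ r) (r / t * (a * t) ^ r) t := by
  have hr := (Real.hasDerivAt_rpow_const (p := r) (Or.inl h)).comp t
    ((hasDerivAt_id' t).const_mul a)
  refine HasDerivAt.congr_deriv (f := fun s => (a * s) ^ r) hr ?_
  rw [Real.rpow_sub_one h]
  field_simp [left_ne_zero_of_mul h, right_ne_zero_of_mul h]

section Advection

variable {E : Type*} [NormedAddCommGroup E] [InnerProductSpace ℝ E]

theorem hasDerivAt_advected_exponent (k : ℝ) (v a : E) {t : ℝ} (ht : t ≠ 0) :
    HasDerivAt (fun s => -‖a - s • v‖ ^ 2 / (4 * s) - k * s)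
      (‖a - t • v‖ ^ 2 / (4 * t ^ 2) + ⟪v, a - t • v⟫ / (2 * t) - k) t := by
  have hw : HasDerivAt (fun s => a - s • v) (-v) t := by
    simpa using ((hasDerivAt_id t).smul_const v).const_sub a
  have h : HasDerivAt (fun s => -‖a - s • v‖ ^ 2 / (4 * s) - k * s) _ t :=
    (hw.norm_sq.neg.div ((hasDerivAt_id' t).const_mul 4) (by simpa using ht)).sub
      ((hasDerivAt_id' t).const_mul k)
  refine h.congr_deriv ?_
  rw [Pi.neg_apply, inner_neg_right, real_inner_comm]
  field_simp
  ring

noncomputable def advectedHeatKernel (d k : ℝ) (v a : E) (s : ℝ) : ℝ :=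
  (4 * π * s) ^ (-d / 2) * exp (-‖a - s • v‖ ^ 2 / (4 * s) - k * s)

theorem hasDerivAt_advectedHeatKernel (d k : ℝ) (v a : E) {t : ℝ} (ht : t ≠ 0) :
    HasDerivAt (advectedHeatKernel d k v a)
      (advectedHeatKernel d k v a t *
        (‖a - t • v‖ ^ 2 / (4 * t ^ 2) + ⟪v, a - t • v⟫ / (2 * t) - k - d / (2 * t))) t := by
  have h : HasDerivAt (advectedHeatKernel d k v a) _ t :=
    (hasDerivAt_const_mul_rpow_const (mul_ne_zero (by positivity) ht) (-d / 2)).mul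
      (hasDerivAt_advected_exponent k v a ht).exp
  refine h.congr_deriv ?_
  rw [advectedHeatKernel]
  ring

end Advection

theorem channel_impulse_response_satisfies_advection_reaction_diffusion_general
    (p₀ v : EuclideanSpace ℝ (Fin 3)) (k : ℝ)
    (C : ℝ → EuclideanSpace ℝ (Fin 3) → ℝ)
    (hC : ∀ t p, C t p =
      (4*π*t) ^ (-(3:ℝ)/2) * Real.exp (-‖p - p₀ - t • v‖^2 / (4*t) - k*t)) :
    ∀ t : ℝ, 0 < t → ∀ p : EuclideanSpace ℝ (Fin 3),
      deriv (fun s => C s p) t =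
        (∑ i : Fin 3,
          fderiv ℝ (fun q => fderiv ℝ (C t) q (EuclideanSpace.single i 1)) p
            (EuclideanSpace.single i 1))
        - (inner ℝ v (gradient (C t) p) : ℝ)
        - k * C t p := by
  intro t ht p
  have hCs : (fun s => C s p) = advectedHeatKernel 3 k v (p - p₀) := funext fun s => hC s p
  have hCt :
      C t = gaussianProfile ((4 * π * t) ^ (-(3:ℝ) / 2) * exp (-(k * t))) t (p₀ + t • v) := by
    ext q
    rw [hC, gaussianProfile, sub_sub, sub_eq_add_neg, exp_add]
    ring
  have hCtp : C t p = advectedHeatKernel 3 k v (p - p₀) t := hC t p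
  simp_rw [← EuclideanSpace.basisFun_apply, hCs, (hasDerivAt_advectedHeatKernel 3 k v _ ht.ne').deriv]
  rw [hCt, sum_fderiv_fderiv_gaussianProfile, gradient_gaussianProfile, inner_smul_right, ← hCt,
    hCtp, ← sub_sub, Fintype.card_fin]
  field_simp
  ring

/-- The channel impulse response
`C(t,p) = (4πt)^{−3/2} exp(−‖p − p₀ − t v‖²/(4t) − kt)` satisfies the
advection–reaction–diffusion equation `∂C/∂t = ΔC − ⟪v, ∇C⟫ − kC` for `t > 0`,
where `ΔC` is expressed as the sum of the second partial derivatives along the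
coordinate directions of `ℝ³`. -/
theorem channel_impulse_response_satisfies_advection_reaction_diffusion
    (p₀ v : EuclideanSpace ℝ (Fin 3)) (k : ℝ) (hk : 0 ≤ k)
    (C : ℝ → EuclideanSpace ℝ (Fin 3) → ℝ)
    (hC : ∀ t p, C t p =
      (4*π*t) ^ (-(3:ℝ)/2) * Real.exp (-‖p - p₀ - t • v‖^2 / (4*t) - k*t)) :
    ∀ t : ℝ, 0 < t → ∀ p : EuclideanSpace ℝ (Fin 3),
      deriv (fun s => C s p) t =
        (∑ i : Fin 3,
          fderiv ℝ (fun q => fderiv ℝ (C t) q (EuclideanSpace.single i 1)) p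
            (EuclideanSpace.single i 1))
        - (inner ℝ v (gradient (C t) p) : ℝ)
        - k * C t p :=
  channel_impulse_response_satisfies_advection_reaction_diffusion_general p₀ v k C hC
end

section
/- For every a < 0 and every k > 0, one has ∫₀^∞ erf( a/√τ ) · exp(−k·τ) dτ = (1/k)·( exp(2a·√k) − 1 ). -/
open Real MeasureTheory

/-!
Write `erf (a / √τ) = -(2 / √π) ∫_{a/√τ}^0 exp (-b²) db` and exchange the order of integration
over the region `a / √τ < b < 0`, which is also `b < 0, τ < (a / b)²`. The `τ`-integral is
elementary and leaves `∫₀^∞ exp (-x²) (1 - exp (-c² / x²)) dx` with `c = -a √k`. Since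
`x² + c² / x² = (x - c / x)² + 2c`, this reduces to `∫₀^∞ exp (-(x - c / x)²) dx = √π / 2`: the
substitution `x ↦ c / x` shows that the weights `1` and `c / x²` give the same integral, and the
substitution `u = x - c / x` turns their sum into the Gaussian integral over `ℝ`.
-/

open Set

section ChangeOfVariables

variable {E : Type*} [NormedAddCommGroup E] [NormedSpace ℝ E] {c : ℝ}

theorem image_const_div_Ioi (hc : 0 < c) : (fun x : ℝ => c / x) '' Ioi 0 = Ioi 0 := by
  ext y
  refine ⟨fun ⟨x, hx, hxy⟩ => hxy ▸ div_pos hc hx, fun hy => ⟨c / y, div_pos hc hy, ?_⟩⟩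
  field_simp [hc.ne']

theorem integral_comp_const_div_Ioi (g : ℝ → E) (hc : 0 < c) :
    ∫ x in Ioi 0, (c / x ^ 2) • g (c / x) = ∫ y in Ioi 0, g y := by
  have hderiv : ∀ x ∈ Ioi (0 : ℝ), HasDerivWithinAt (fun x => c / x) (-(c / x ^ 2)) (Ioi 0) x :=
    fun x hx => by
      simpa [div_eq_mul_inv] using ((hasDerivAt_inv (ne_of_gt hx)).const_mul c).hasDerivWithinAt
  have hinj : InjOn (fun x : ℝ => c / x) (Ioi 0) := fun x _ y _ (hxy : c / x = c / y) => by
    rw [div_eq_mul_inv, div_eq_mul_inv] at hxy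
    exact inv_injective (mul_left_cancel₀ hc.ne' hxy)
  have := integral_image_eq_integral_abs_deriv_smul measurableSet_Ioi hderiv hinj g
  rw [image_const_div_Ioi hc] at this
  rw [this]
  refine setIntegral_congr_fun measurableSet_Ioi fun x hx => ?_
  rw [abs_neg, abs_of_pos (div_pos hc (pow_pos hx 2))]

theorem strictMonoOn_sub_const_div (hc : 0 < c) :
    StrictMonoOn (fun x : ℝ => x - c / x) (Ioi 0) :=
  fun _ hx _ _ hxy => sub_lt_sub hxy (div_lt_div_of_pos_left hc hx hxy)

-- The preimage of `y` is the positive root of `x ^ 2 - y * x - c`.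
theorem image_sub_const_div_Ioi (hc : 0 < c) : (fun x : ℝ => x - c / x) '' Ioi 0 = univ := by
  refine eq_univ_of_forall fun y => ?_
  set s := √(y ^ 2 + 4 * c)
  have hs : s ^ 2 = y ^ 2 + 4 * c := sq_sqrt (by positivity)
  have hys : 0 < y + s := by
    have : |y| < s := by rw [← sqrt_sq_eq_abs]; exact sqrt_lt_sqrt (sq_nonneg y) (by linarith)
    linarith [neg_abs_le y]
  refine ⟨(y + s) / 2, half_pos hys, ?_⟩
  field_simp
  nlinarith [hs]

theorem hasDerivAt_sub_const_div {x : ℝ} (hx : x ≠ 0) :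
    HasDerivAt (fun x => x - c / x) (1 + c / x ^ 2) x := by
  have h : HasDerivAt (fun x => x - c / x) (1 - c * -(x ^ 2)⁻¹) x := by
    simpa only [div_eq_mul_inv] using (hasDerivAt_id' x).fun_sub ((hasDerivAt_inv hx).const_mul c)
  exact h.congr_deriv (by ring)

theorem integral_comp_sub_const_div_Ioi (g : ℝ → E) (hc : 0 < c) :
    ∫ x in Ioi 0, (1 + c / x ^ 2) • g (x - c / x) = ∫ y, g y := by
  have := integral_image_eq_integral_abs_deriv_smul measurableSet_Ioi
    (fun x hx => (hasDerivAt_sub_const_div (ne_of_gt hx)).hasDerivWithinAt)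
    (strictMonoOn_sub_const_div hc).injOn g
  rw [image_sub_const_div_Ioi hc, Measure.restrict_univ] at this
  rw [this]
  refine setIntegral_congr_fun measurableSet_Ioi fun x hx => ?_
  rw [abs_of_pos (by positivity)]

theorem integrableOn_comp_sub_const_div_Ioi_iff (g : ℝ → E) (hc : 0 < c) :
    IntegrableOn (fun x => (1 + c / x ^ 2) • g (x - c / x)) (Ioi 0) ↔ Integrable g := by
  have := integrableOn_image_iff_integrableOn_abs_deriv_smul measurableSet_Ioi
    (fun x hx => (hasDerivAt_sub_const_div (ne_of_gt hx)).hasDerivWithinAt)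
    (strictMonoOn_sub_const_div hc).injOn g
  rw [image_sub_const_div_Ioi hc, integrableOn_univ] at this
  rw [this]
  refine integrableOn_congr_fun (fun x hx => ?_) measurableSet_Ioi
  rw [abs_of_pos (by positivity)]

end ChangeOfVariables

section Glasser

variable {c : ℝ}

theorem integral_exp_neg_sq_sub_const_div_Ioi (hc : 0 < c) :
    ∫ x in Ioi 0, exp (-(x - c / x) ^ 2) = √π / 2 := by
  set f : ℝ → ℝ := fun x => exp (-(x - c / x) ^ 2)
  have hgauss : Integrable fun y : ℝ => exp (-y ^ 2) := by
    simpa using integrable_exp_neg_mul_sq one_pos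
  have hsum : ∫ x in Ioi 0, (1 + c / x ^ 2) * f x = √π := by
    simpa using (integral_comp_sub_const_div_Ioi (fun y => exp (-y ^ 2)) hc).trans
      (by simpa using integral_gaussian 1)
  have hsum_int : IntegrableOn (fun x => (1 + c / x ^ 2) * f x) (Ioi 0) :=
    (integrableOn_comp_sub_const_div_Ioi_iff (fun y => exp (-y ^ 2)) hc).2 hgauss
  -- `x ↦ c / x` preserves `f`, so both halves of the integrand in `hsum` have the same integral.
  have hsymm : ∫ x in Ioi 0, c / x ^ 2 * f x = ∫ x in Ioi 0, f x := by
    refine .trans ?_ (integral_comp_const_div_Ioi f hc)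
    refine setIntegral_congr_fun measurableSet_Ioi fun x (hx : 0 < x) => ?_
    have : c / x - c / (c / x) = -(x - c / x) := by field_simp [hc.ne', hx.ne']; ring
    simp only [f, smul_eq_mul, this, neg_sq]
  have hf_int : IntegrableOn f (Ioi 0) := by
    refine hsum_int.mono' (by fun_prop) ?_
    filter_upwards [ae_restrict_mem measurableSet_Ioi] with x hx
    rw [norm_of_nonneg (exp_pos _).le]
    exact le_mul_of_one_le_left (exp_pos _).le (le_add_of_nonneg_right (by positivity))
  have hsplit : ∫ x in Ioi 0, (1 + c / x ^ 2) * f x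
      = (∫ x in Ioi 0, f x) + ∫ x in Ioi 0, c / x ^ 2 * f x := by
    have hdiv_int : IntegrableOn (fun x => c / x ^ 2 * f x) (Ioi 0) :=
      (hsum_int.sub hf_int).congr_fun (fun x _ => by simp only [Pi.sub_apply]; ring)
        measurableSet_Ioi
    simp only [add_mul, one_mul]
    exact integral_add hf_int hdiv_int
  linarith

theorem integral_exp_neg_sq_add_sq_div_sq_Ioi (hc : 0 < c) :
    ∫ x in Ioi 0, exp (-(x ^ 2 + c ^ 2 / x ^ 2)) = √π / 2 * exp (-(2 * c)) := by
  rw [← integral_exp_neg_sq_sub_const_div_Ioi hc, ← integral_mul_const]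
  refine setIntegral_congr_fun measurableSet_Ioi fun x (hx : 0 < x) => ?_
  rw [← exp_add]
  congr 1
  field_simp
  ring

theorem integral_exp_neg_sq_mul_one_sub_exp_neg_sq_div_sq_Ioi (hc : 0 < c) :
    ∫ x in Ioi 0, exp (-x ^ 2) * (1 - exp (-(c ^ 2 / x ^ 2)))
      = √π / 2 * (1 - exp (-(2 * c))) := by
  have hgauss : IntegrableOn (fun x : ℝ => exp (-x ^ 2)) (Ioi 0) := by
    simpa using (integrable_exp_neg_mul_sq one_pos).integrableOn
  have hglasser : IntegrableOn (fun x => exp (-(x ^ 2 + c ^ 2 / x ^ 2))) (Ioi 0) := by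
    refine hgauss.mono' (by fun_prop) (ae_of_all _ fun x => ?_)
    rw [norm_of_nonneg (exp_pos _).le, exp_le_exp, neg_le_neg_iff]
    exact le_add_of_nonneg_right (by positivity)
  have hsplit : ∀ x : ℝ, exp (-x ^ 2) * (1 - exp (-(c ^ 2 / x ^ 2)))
      = exp (-x ^ 2) - exp (-(x ^ 2 + c ^ 2 / x ^ 2)) := fun x => by
    rw [mul_one_sub, ← exp_add, neg_add]
  simp only [hsplit]
  rw [integral_sub hgauss hglasser, integral_exp_neg_sq_add_sq_div_sq_Ioi hc]
  have := integral_gaussian_Ioi 1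
  simp only [neg_mul, one_mul, div_one] at this
  rw [this]
  ring

end Glasser

theorem erf_of_nonpos {q : ℝ} (hq : q ≤ 0) :
    erf q = -(2 / √π) * ∫ b in Ioo q 0, exp (-b ^ 2) := by
  rw [erf, intervalIntegral.integral_symm, intervalIntegral.integral_of_le hq,
    integral_Ioc_eq_integral_Ioo]
  ring

theorem integral_Ioo_exp_neg_mul {k T : ℝ} (hk : k ≠ 0) (hT : 0 ≤ T) :
    ∫ τ in Ioo 0 T, exp (-(k * τ)) = (1 - exp (-(k * T))) / k := by
  rw [← integral_Ioc_eq_integral_Ioo, ← intervalIntegral.integral_of_le hT,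
    intervalIntegral.integral_comp_mul_left (fun τ => exp (-τ)) hk,
    intervalIntegral.integral_comp_neg (fun τ => exp τ), integral_exp]
  simp only [mul_zero, neg_zero, exp_zero, smul_eq_mul]
  field_simp

theorem div_sqrt_lt_iff_lt_div_sq {a b τ : ℝ} (ha : a < 0) (hb : b < 0) (hτ : 0 < τ) :
    a / √τ < b ↔ τ < (a / b) ^ 2 := by
  rw [div_lt_iff₀ (sqrt_pos.2 hτ), mul_comm, ← lt_div_iff_of_neg hb,
    sqrt_lt' (div_pos_of_neg_of_neg ha hb)]

variable {E : Type*} [NormedAddCommGroup E] [NormedSpace ℝ E] in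
theorem integral_Ioi_integral_Ioo_div_sqrt_swap {a : ℝ} (ha : a < 0) {F : ℝ → ℝ → E}
    (hF : Integrable (Function.uncurry F)
      ((volume.restrict (Ioi 0)).prod (volume.restrict (Iio 0)))) :
    ∫ τ in Ioi 0, ∫ b in Ioo (a / √τ) 0, F τ b
      = ∫ b in Iio 0, ∫ τ in Ioo 0 ((a / b) ^ 2), F τ b := by
  set S : Set (ℝ × ℝ) := {p | a / √p.1 < p.2}
  have hS : MeasurableSet S := measurableSet_lt (by fun_prop) measurable_snd
  have hτ_slice (τ : ℝ) : ∫ b in Iio 0, S.indicator (Function.uncurry F) (τ, b)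
      = ∫ b in Ioo (a / √τ) 0, F τ b := by
    rw [← Iio_inter_Ioi, ← setIntegral_indicator measurableSet_Ioi]
    rfl
  have hb_slice : ∀ b ∈ Iio (0 : ℝ), ∫ τ in Ioi 0, S.indicator (Function.uncurry F) (τ, b)
      = ∫ τ in Ioo 0 ((a / b) ^ 2), F τ b := by
    intro b hb
    rw [← Ioi_inter_Iio, ← setIntegral_indicator measurableSet_Iio]
    refine setIntegral_congr_fun measurableSet_Ioi fun τ (hτ : 0 < τ) => ?_
    simp only [indicator, S, mem_ofPred_eq, mem_Iio, div_sqrt_lt_iff_lt_div_sq ha hb hτ]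
    rfl
  calc ∫ τ in Ioi 0, ∫ b in Ioo (a / √τ) 0, F τ b
      = ∫ τ in Ioi 0, ∫ b in Iio 0, S.indicator (Function.uncurry F) (τ, b) := by
        simp only [hτ_slice]
    _ = ∫ b in Iio 0, ∫ τ in Ioi 0, S.indicator (Function.uncurry F) (τ, b) :=
        integral_integral_swap (hF.indicator hS)
    _ = ∫ b in Iio 0, ∫ τ in Ioo 0 ((a / b) ^ 2), F τ b :=
        setIntegral_congr_fun measurableSet_Iio hb_slice

/-- `∫₀^∞ erf(a/√τ) exp(−kτ) dτ = (1/k)(exp(2a√k) − 1)` for `a < 0`, `k > 0`. -/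
theorem integral_erf_exp_neg (a k : ℝ) (ha : a < 0) (hk : 0 < k) :
    ∫ τ in Set.Ioi (0:ℝ), erf (a / Real.sqrt τ) * Real.exp (-(k*τ))
    = (1/k) * (Real.exp (2*a*Real.sqrt k) - 1) := by
  set c := -a * √k
  have hc : 0 < c := mul_pos (neg_pos.2 ha) (sqrt_pos.2 hk)
  have hc_sq : c ^ 2 = a ^ 2 * k := by rw [mul_pow, neg_sq, sq_sqrt hk.le]
  have hF : Integrable (Function.uncurry fun τ b : ℝ => exp (-(k * τ)) * exp (-b ^ 2))
      ((volume.restrict (Ioi 0)).prod (volume.restrict (Iio 0))) := by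
    have hτ : IntegrableOn (fun τ : ℝ => exp (-(k * τ))) (Ioi 0) := by
      simpa only [neg_mul] using exp_neg_integrableOn_Ioi 0 hk
    have hb : IntegrableOn (fun b : ℝ => exp (-b ^ 2)) (Iio 0) := by
      simpa using (integrable_exp_neg_mul_sq one_pos).integrableOn
    exact hτ.mul_prod hb
  calc ∫ τ in Ioi 0, erf (a / √τ) * exp (-(k * τ))
      = -(2 / √π) * ∫ τ in Ioi 0, ∫ b in Ioo (a / √τ) 0, exp (-(k * τ)) * exp (-b ^ 2) := by
        rw [← integral_const_mul]
        refine setIntegral_congr_fun measurableSet_Ioi fun τ _ => ?_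
        rw [erf_of_nonpos (div_nonpos_of_nonpos_of_nonneg ha.le (sqrt_nonneg τ)),
          integral_const_mul]
        ring
    _ = -(2 / √π) * ∫ b in Iio 0, ∫ τ in Ioo 0 ((a / b) ^ 2), exp (-(k * τ)) * exp (-b ^ 2) := by
        rw [integral_Ioi_integral_Ioo_div_sqrt_swap ha hF]
    _ = -(2 / √π) / k * ∫ b in Iio 0, exp (-b ^ 2) * (1 - exp (-(c ^ 2 / b ^ 2))) := by
        rw [div_eq_mul_inv (-(2 / √π)) k, mul_assoc, ← integral_const_mul k⁻¹]
        congr 1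
        refine setIntegral_congr_fun measurableSet_Iio fun b _ => ?_
        rw [integral_mul_const, integral_Ioo_exp_neg_mul hk.ne' (sq_nonneg _),
          show k * (a / b) ^ 2 = c ^ 2 / b ^ 2 by rw [hc_sq]; ring]
        ring
    _ = -(2 / √π) / k * ∫ x in Ioi 0, exp (-x ^ 2) * (1 - exp (-(c ^ 2 / x ^ 2))) := by
        have := integral_comp_neg_Ioi 0 fun b => exp (-b ^ 2) * (1 - exp (-(c ^ 2 / b ^ 2)))
        simp only [neg_sq, neg_zero] at this
        rw [this, integral_Iic_eq_integral_Iio]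
    _ = 1 / k * (exp (2 * a * √k) - 1) := by
        rw [integral_exp_neg_sq_mul_one_sub_exp_neg_sq_div_sq_Ioi hc,
          show -(2 * c) = 2 * a * √k by ring]
        field_simp
        ring
end

section
/- For every x > 0 and every v ≥ 0, one has ∫₀^∞ (4πτ)^{−3/2} · exp( −(x − v·τ)²/(4τ) ) dτ = 1/(4πx). In particular, in the absence of flow perpendicular to the source–receiver axis and of molecule degradation, any positive flow v along the axis from the source towards the receiver leaves the asymptotic impact of the noise source unchanged from the no-flow case. -/
/-!
With `a = x/2` and `b = v/2` the integrand is `(4π)^(-3/2) τ^(-3/2) exp(-(a - bτ)²/τ)`, and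
`(a/√π) τ^(-3/2) exp(-(a - bτ)²/τ)` is the (inverse Gaussian) density of the time a drifted
Brownian motion first reaches a level at distance `a`; when the drift `b` points towards that level
the level is reached almost surely, so the density has total mass `1` whatever `b ≥ 0` is.

Concretely, with `G(y) = ∫₀^y exp(-t²) dt`, `u = (a - bτ)/√τ` and `w = (a + bτ)/√τ`, the function
`G(u) + exp(4ab) G(w)` is an antiderivative of `-a τ^(-3/2) exp(-u²)`: since `w² - u² = 4ab`,
both terms of the chain rule carry the same Gaussian factor. It tends to `(1 + exp(4ab)) √π/2`
as `τ → 0⁺` and to `(exp(4ab) - 1) √π/2` as `τ → ∞` (for `b > 0` because `u → -∞`, `w → ∞`),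
and the difference `√π` does not depend on `b`.
-/

open Real MeasureTheory Set Filter Topology

theorem integral_Ioi_of_hasDerivAt_of_nonneg_of_tendsto_nhdsGT {g g' : ℝ → ℝ} {a l₀ l : ℝ}
    (hg₀ : Tendsto g (𝓝[>] a) (𝓝 l₀)) (hderiv : ∀ x ∈ Ioi a, HasDerivAt g (g' x) x)
    (g'pos : ∀ x ∈ Ioi a, 0 ≤ g' x) (hg : Tendsto g atTop (𝓝 l)) :
    ∫ x in Ioi a, g' x = l - l₀ := by
  classical
  have hupdate : ∀ x ∈ Ioi a, Function.update g a l₀ x = g x := fun x hx ↦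
    Function.update_of_ne (ne_of_gt hx) _ _
  simpa using integral_Ioi_of_hasDerivAt_of_nonneg (g := Function.update g a l₀)
    (continuousWithinAt_update_same.2 (by rwa [Ici_sdiff_left]))
    (fun x hx ↦ (hderiv x hx).congr_of_eventuallyEq
      (eventuallyEq_of_mem (Ioi_mem_nhds hx) hupdate)) g'pos
    (hg.congr' (eventuallyEq_of_mem (Ioi_mem_atTop a) hupdate).symm)

theorem rpow_neg_three_div_two {τ : ℝ} (hτ : 0 < τ) : τ ^ (-(3:ℝ)/2) = (τ * √τ)⁻¹ := by
  rw [neg_div, rpow_neg hτ.le, show (3:ℝ)/2 = 1 + 1/2 by norm_num, rpow_add hτ, rpow_one,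
    ← sqrt_eq_rpow]

noncomputable def gaussPrimitive (y : ℝ) : ℝ := ∫ t in (0:ℝ)..y, exp (-t ^ 2)

theorem hasDerivAt_gaussPrimitive (y : ℝ) : HasDerivAt gaussPrimitive (exp (-y ^ 2)) y :=
  ((by fun_prop : Continuous fun t : ℝ ↦ exp (-t ^ 2)).integral_hasStrictDerivAt 0 y).hasDerivAt

theorem continuous_gaussPrimitive : Continuous gaussPrimitive :=
  continuous_iff_continuousAt.2 fun y ↦ (hasDerivAt_gaussPrimitive y).continuousAt

theorem gaussPrimitive_zero : gaussPrimitive 0 = 0 := intervalIntegral.integral_same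

theorem gaussPrimitive_neg (y : ℝ) : gaussPrimitive (-y) = -gaussPrimitive y := by
  have h := intervalIntegral.integral_comp_neg (a := 0) (b := y) fun t ↦ exp (-t ^ 2)
  simp only [neg_sq, neg_zero] at h
  rw [gaussPrimitive, gaussPrimitive, h, intervalIntegral.integral_symm]

theorem tendsto_gaussPrimitive_atTop : Tendsto gaussPrimitive atTop (𝓝 (√π / 2)) := by
  have hint : IntegrableOn (fun t : ℝ ↦ exp (-t ^ 2)) (Ioi 0) := by
    simpa using (integrable_exp_neg_mul_sq one_pos).integrableOn
  have hval : ∫ t in Ioi (0:ℝ), exp (-t ^ 2) = √π / 2 := by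
    simpa using integral_gaussian_Ioi 1
  rw [← hval]
  exact intervalIntegral_tendsto_integral_Ioi 0 hint tendsto_id

theorem tendsto_gaussPrimitive_atBot : Tendsto gaussPrimitive atBot (𝓝 (-(√π / 2))) := by
  simpa [Function.comp_def, gaussPrimitive_neg] using
    (tendsto_gaussPrimitive_atTop.comp tendsto_neg_atBot_atTop).neg

theorem hasDerivAt_add_mul_div_sqrt (a c : ℝ) {τ : ℝ} (hτ : 0 < τ) :
    HasDerivAt (fun s ↦ (a + c * s) / √s) ((c * τ - a) / (2 * τ * √τ)) τ := by
  refine ((((hasDerivAt_id' τ).const_mul c).const_add a).div (hasDerivAt_sqrt hτ.ne')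
    (sqrt_ne_zero'.2 hτ)).congr_deriv ?_
  field_simp
  rw [sq_sqrt hτ.le]
  ring

theorem add_mul_div_sqrt_eq (a c : ℝ) {τ : ℝ} (hτ : 0 < τ) :
    (a + c * τ) / √τ = a * (√τ)⁻¹ + c * √τ := by
  have := sqrt_pos.2 hτ
  field_simp
  rw [sq_sqrt hτ.le]

theorem tendsto_add_mul_div_sqrt_nhdsGT_zero {a : ℝ} (ha : 0 < a) (c : ℝ) :
    Tendsto (fun s ↦ (a + c * s) / √s) (𝓝[>] 0) atTop := by
  have hnum : Tendsto (fun s ↦ a + c * s) (𝓝[>] 0) (𝓝 a) :=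
    (Continuous.tendsto' (by fun_prop) 0 a (by simp)).mono_left nhdsWithin_le_nhds
  have hinv : Tendsto (fun s ↦ (√s)⁻¹) (𝓝[>] 0) atTop := by
    simpa [Function.comp_def, sqrt_inv] using tendsto_sqrt_atTop.comp tendsto_inv_nhdsGT_zero
  simpa [div_eq_mul_inv] using hnum.pos_mul_atTop ha hinv

theorem tendsto_mul_inv_sqrt_atTop (a : ℝ) : Tendsto (fun s ↦ a * (√s)⁻¹) atTop (𝓝 0) := by
  simpa using (tendsto_inv_atTop_zero.comp tendsto_sqrt_atTop).const_mul a

theorem tendsto_add_mul_div_sqrt_atTop (a : ℝ) {c : ℝ} (hc : 0 < c) :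
    Tendsto (fun s ↦ (a + c * s) / √s) atTop atTop :=
  ((tendsto_mul_inv_sqrt_atTop a).add_atTop (tendsto_sqrt_atTop.const_mul_atTop hc)).congr'
    (eventuallyEq_of_mem (Ioi_mem_atTop 0) fun _ hs ↦ (add_mul_div_sqrt_eq a c hs).symm)

theorem tendsto_add_mul_div_sqrt_atBot (a : ℝ) {c : ℝ} (hc : c < 0) :
    Tendsto (fun s ↦ (a + c * s) / √s) atTop atBot :=
  ((tendsto_mul_inv_sqrt_atTop a).add_atBot
    (tendsto_sqrt_atTop.const_mul_atTop_of_neg hc)).congr'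
    (eventuallyEq_of_mem (Ioi_mem_atTop 0) fun _ hs ↦ (add_mul_div_sqrt_eq a c hs).symm)

noncomputable def firstPassagePrimitive (a b τ : ℝ) : ℝ :=
  gaussPrimitive ((a - b * τ) / √τ) + exp (4 * a * b) * gaussPrimitive ((a + b * τ) / √τ)

theorem hasDerivAt_firstPassagePrimitive (a b : ℝ) {τ : ℝ} (hτ : 0 < τ) :
    HasDerivAt (firstPassagePrimitive a b)
      (-(a * (τ ^ (-(3:ℝ)/2) * exp (-(a - b * τ) ^ 2 / τ)))) τ := by
  have hu := (hasDerivAt_gaussPrimitive _).comp τ (hasDerivAt_add_mul_div_sqrt a (-b) hτ)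
  have hw := (hasDerivAt_gaussPrimitive _).comp τ (hasDerivAt_add_mul_div_sqrt a b hτ)
  simp only [neg_mul, ← sub_eq_add_neg] at hu
  have hsq : ((a - b * τ) / √τ) ^ 2 = (a - b * τ) ^ 2 / τ := by
    rw [div_pow, sq_sqrt hτ.le]
  have hexp : exp (4 * a * b) * exp (-((a + b * τ) / √τ) ^ 2) = exp (-(a - b * τ) ^ 2 / τ) := by
    rw [← exp_add, div_pow, sq_sqrt hτ.le]
    congr 1
    field_simp
    ring
  refine (hu.add (hw.const_mul (exp (4 * a * b)))).congr_deriv ?_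
  rw [← mul_assoc, hexp, hsq, rpow_neg_three_div_two hτ, neg_div]
  have := sqrt_pos.2 hτ
  field_simp
  ring

theorem tendsto_firstPassagePrimitive_nhdsGT_zero {a : ℝ} (ha : 0 < a) (b : ℝ) :
    Tendsto (firstPassagePrimitive a b) (𝓝[>] 0)
      (𝓝 ((1 + exp (4 * a * b)) * (√π / 2))) := by
  have hu := tendsto_gaussPrimitive_atTop.comp (tendsto_add_mul_div_sqrt_nhdsGT_zero ha (-b))
  have hw := tendsto_gaussPrimitive_atTop.comp (tendsto_add_mul_div_sqrt_nhdsGT_zero ha b)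
  simp only [Function.comp_def, neg_mul, ← sub_eq_add_neg] at hu hw
  rw [add_mul, one_mul]
  exact hu.add (hw.const_mul _)

theorem tendsto_firstPassagePrimitive_atTop (a : ℝ) {b : ℝ} (hb : 0 ≤ b) :
    Tendsto (firstPassagePrimitive a b) atTop (𝓝 ((exp (4 * a * b) - 1) * (√π / 2))) := by
  rcases hb.eq_or_lt with rfl | hb
  · have h := ((continuous_gaussPrimitive.tendsto 0).comp
      (tendsto_mul_inv_sqrt_atTop a)).const_mul 2
    simp only [Function.comp_def, gaussPrimitive_zero, mul_zero] at h
    convert h using 2 with τ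
    · simp [firstPassagePrimitive, div_eq_mul_inv, two_mul]
    · simp
  · have hu := tendsto_gaussPrimitive_atBot.comp
      (tendsto_add_mul_div_sqrt_atBot a (neg_lt_zero.2 hb))
    have hw := tendsto_gaussPrimitive_atTop.comp (tendsto_add_mul_div_sqrt_atTop a hb)
    simp only [Function.comp_def, neg_mul, ← sub_eq_add_neg] at hu hw
    have h := hu.add (hw.const_mul (exp (4 * a * b)))
    rwa [show -(√π / 2) + exp (4 * a * b) * (√π / 2) = (exp (4 * a * b) - 1) * (√π / 2) by
      ring] at h

theorem integral_rpow_neg_three_div_two_mul_exp_neg_sq_div {a b : ℝ} (ha : 0 < a)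
    (hb : 0 ≤ b) :
    ∫ τ in Ioi (0:ℝ), τ ^ (-(3:ℝ)/2) * exp (-(a - b * τ) ^ 2 / τ) = √π / a := by
  have hFTC := integral_Ioi_of_hasDerivAt_of_nonneg_of_tendsto_nhdsGT
    (tendsto_firstPassagePrimitive_nhdsGT_zero ha b).neg
    (fun τ hτ ↦ (hasDerivAt_firstPassagePrimitive a b hτ).neg.congr_deriv (neg_neg _))
    (fun τ hτ ↦ mul_nonneg ha.le (mul_nonneg (rpow_nonneg hτ.out.le _) (exp_nonneg _)))
    (tendsto_firstPassagePrimitive_atTop a hb).neg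
  rw [integral_const_mul] at hFTC
  rw [eq_div_iff ha.ne', mul_comm, hFTC]
  ring

/-- In the absence of perpendicular flow and molecule degradation, any nonnegative flow `v`
along the axis from the source towards the receiver leaves the asymptotic impact of the
noise source unchanged from the no-flow case: `∫₀^∞ (4πτ)^{−3/2} exp(−(x−vτ)²/(4τ)) dτ
= 1/(4πx)`. -/
theorem asymptotic_impact_unchanged_by_positive_axial_flow (x v : ℝ)
    (hx : 0 < x) (hv : 0 ≤ v) :
    ∫ τ in Set.Ioi (0:ℝ), (4*π*τ) ^ (-(3:ℝ)/2) * Real.exp (-(x - v*τ)^2 / (4*τ))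
    = 1/(4*π*x) := by
  have hintegrand : ∀ τ ∈ Ioi (0:ℝ), (4*π*τ) ^ (-(3:ℝ)/2) * exp (-(x - v*τ)^2 / (4*τ))
      = (4*π) ^ (-(3:ℝ)/2) * (τ ^ (-(3:ℝ)/2) * exp (-(x/2 - v/2 * τ) ^ 2 / τ)) := by
    intro τ hτ
    rw [mul_rpow (by positivity) hτ.out.le, mul_assoc]
    congr 3
    field_simp
    ring
  have hsqrt : √(4 * π) = 2 * √π := by
    rw [sqrt_mul zero_le_four, show (4:ℝ) = 2 ^ 2 by norm_num, sqrt_sq zero_le_two]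
  rw [setIntegral_congr_fun measurableSet_Ioi hintegrand, integral_const_mul,
    integral_rpow_neg_three_div_two_mul_exp_neg_sq_div (half_pos hx) (by positivity),
    rpow_neg_three_div_two (by positivity), hsqrt]
  have := sqrt_pos.2 pi_pos
  field_simp
end
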